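/- If μ is a Borel measure on ℝⁿ that is finite on dyadic cubes, and (a_Q)_{Q∈𝒟} is a nonnegative sequence indexed by dyadic cubes satisfying the Carleson condition ∑_{Q⊆R} a_Q ≤ C·μ(R) for all dyadic cubes R, then for every f ∈ L²(μ) one has ∑_{Q∈𝒟} a_Q |⟨f⟩^μ_Q|² ≤ C'·‖f‖²_{L²(μ)}, where ⟨f⟩^μ_Q = μ(Q)⁻¹∫_Q f dμ and C' depends only on C. -/

import Mathlib

open MeasureTheory Filter
open scoped ENNReal

/-- A dyadic cube in `ℝⁿ`, encoded by its generation `k` (side length `2 ^ k`)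
and position `m` (corner at `m * 2 ^ k`). -/
structure DyadicCube (n : ℕ) where
  k : ℤ
  m : Fin n → ℤ

namespace DyadicCube

variable {n : ℕ}

/-- The underlying half-open cube in `ℝⁿ`. -/
def toSet (Q : DyadicCube n) : Set (Fin n → ℝ) :=
  {x | ∀ i, (Q.m i : ℝ) * (2 : ℝ) ^ Q.k ≤ x i ∧ x i < ((Q.m i : ℝ) + 1) * (2 : ℝ) ^ Q.k}

/-- The side length `ℓ(Q)` of the cube. -/
noncomputable def len (Q : DyadicCube n) : ℝ := (2 : ℝ) ^ Q.k

/-- The dyadic parent `Q^{(1)}`. -/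
def parent (Q : DyadicCube n) : DyadicCube n :=
  ⟨Q.k + 1, fun i => Int.fdiv (Q.m i) 2⟩

/-- The ancestor `Q^{(r)}` of order `r`. -/
def iterParent (Q : DyadicCube n) (r : ℕ) : DyadicCube n := parent^[r] Q

/-- The dyadic child of `Q` indexed by `ε : Fin n → Bool`. -/
def child (Q : DyadicCube n) (ε : Fin n → Bool) : DyadicCube n :=
  ⟨Q.k - 1, fun i => 2 * Q.m i + (if ε i then 1 else 0)⟩

/-- The descendant of `Q` of order `r` indexed by `v`; these enumerate `ch^r Q`. -/
def childIter (Q : DyadicCube n) (r : ℕ) (v : Fin n → Fin (2 ^ r)) : DyadicCube n :=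
  ⟨Q.k - r, fun i => 2 ^ r * Q.m i + ((v i : ℕ) : ℤ)⟩

end DyadicCube

variable {n : ℕ}

/-- The `μ`-average of `f` over a dyadic cube (zero when the cube is `μ`-null). -/
noncomputable def avg (μ : Measure (Fin n → ℝ)) (f : (Fin n → ℝ) → ℝ) (Q : DyadicCube n) : ℝ :=
  if μ Q.toSet = 0 then 0 else (∫ x in Q.toSet, f x ∂μ) / (μ Q.toSet).toReal

/-- The expectation `E^b_Q f = (⟨f⟩_Q / ⟨b⟩_Q) · b · 1_Q` adapted to an accretive function `b`. -/
noncomputable def Eb (μ : Measure (Fin n → ℝ)) (b f : (Fin n → ℝ) → ℝ) (Q : DyadicCube n) :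
    (Fin n → ℝ) → ℝ :=
  fun x => (avg μ f Q / avg μ b Q) * Q.toSet.indicator b x

/-- The martingale difference `Δ^b_Q f = ∑_{Q' ∈ ch Q} E^b_{Q'} f − E^b_Q f`. -/
noncomputable def Db (μ : Measure (Fin n → ℝ)) (b f : (Fin n → ℝ) → ℝ) (Q : DyadicCube n) :
    (Fin n → ℝ) → ℝ :=
  fun x => (∑ ε : Fin n → Bool, Eb μ b f (Q.child ε) x) - Eb μ b f Q x

/-- The expectation `E^μ_Q f = (⟨f⟩_Q / ⟨b_Q⟩_Q) b_Q` adapted to an accretive system. -/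
noncomputable def Esys (μ : Measure (Fin n → ℝ)) (b : DyadicCube n → (Fin n → ℝ) → ℝ)
    (f : (Fin n → ℝ) → ℝ) (Q : DyadicCube n) : (Fin n → ℝ) → ℝ :=
  fun x => (avg μ f Q / avg μ (b Q) Q) * b Q x

/-- The martingale difference `Δ^μ_Q` adapted to an accretive system. -/
noncomputable def Dsys (μ : Measure (Fin n → ℝ)) (b : DyadicCube n → (Fin n → ℝ) → ℝ)
    (f : (Fin n → ℝ) → ℝ) (Q : DyadicCube n) : (Fin n → ℝ) → ℝ :=
  fun x => (∑ ε : Fin n → Bool, Esys μ b f (Q.child ε) x) - Esys μ b f Q x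

/-- The (formal) adjoint `(Δ^μ_Q)^*`, given by its explicit formula. -/
noncomputable def DsysStar (μ : Measure (Fin n → ℝ)) (b : DyadicCube n → (Fin n → ℝ) → ℝ)
    (f : (Fin n → ℝ) → ℝ) (Q : DyadicCube n) : (Fin n → ℝ) → ℝ :=
  fun x => ∑ ε : Fin n → Bool,
    (Q.child ε).toSet.indicator
      (fun _ => avg μ (fun y => b (Q.child ε) y * f y) (Q.child ε)
                  / avg μ (b (Q.child ε)) (Q.child ε)
                - avg μ (fun y => b Q y * f y) Q / avg μ (b Q) Q) x

/-- The set `𝒮_b` of cubes where the accretive system changes between generations. -/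
def Sb (b : DyadicCube n → (Fin n → ℝ) → ℝ) : Set (DyadicCube n) :=
  {Q | b Q ≠ fun x => Q.toSet.indicator (b Q.parent) x}

/-- An `L^∞(μ)`-accretive system with constants `δ` and `C`. -/
structure AccretiveSystem (μ : Measure (Fin n → ℝ)) (b : DyadicCube n → (Fin n → ℝ) → ℝ)
    (δ C : ℝ) : Prop where
  meas : ∀ Q : DyadicCube n, Measurable (b Q)
  supp : ∀ Q : DyadicCube n, ∀ x, x ∉ Q.toSet → b Q x = 0
  bdd : ∀ Q : DyadicCube n, eLpNorm (b Q) ∞ μ ≤ ENNReal.ofReal C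
  acc : ∀ Q : DyadicCube n, δ * (μ Q.toSet).toReal ≤ |∫ x in Q.toSet, b Q x ∂μ|

/-- A family of dyadic cubes is `μ`-sparse (i.e. `μ`-Carleson) with constant `Λ`. -/
def IsSparse (μ : Measure (Fin n → ℝ)) (S : Set (DyadicCube n)) (Λ : ℝ≥0∞) : Prop :=
  ∀ R : DyadicCube n,
    ∑' Q : {Q : DyadicCube n // Q ∈ S ∧ Q.toSet ⊆ R.toSet}, μ Q.1.toSet ≤ Λ * μ R.toSet

/-! By the layer-cake formula, `∑_Q a_Q ⟨|f|⟩_Q² = ∫₀^∞ 8t ∑_{⟨|f|⟩_Q > 2t} a_Q dt`. For fixed `t`,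
any finite set of cubes with `⟨|f|⟩_Q > 2t` is covered by its maximal cubes, which are pairwise
disjoint, so the Carleson condition bounds the inner sum by `C ∑_R μ(R)` over the maximal `R`;
and `⟨|f|⟩_R > 2t` forces `t μ(R) ≤ ∫_R |f| 1_{|f| > t} dμ`. Integrating in `t`, with
`∫₀^∞ ∫_{|f| > t} |f| dμ dt = ∫ |f|² dμ`, gives `∑_Q a_Q ⟨|f|⟩_Q² ≤ 8C ∫ |f|² dμ`. -/

open Set

theorem volume_setOf_ofReal_lt_inter_Ioi (c : ℝ≥0∞) :
    volume ({t : ℝ | ENNReal.ofReal t < c} ∩ Ioi 0) = c := by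
  rcases eq_or_ne c ⊤ with rfl | hc
  · simp
  have : {t : ℝ | ENNReal.ofReal t < c} ∩ Ioi 0 = Ioo 0 c.toReal := by
    ext t
    simp only [mem_inter_iff, mem_ofPred_eq, mem_Ioi, mem_Ioo]
    exact ⟨fun ⟨h, ht⟩ => ⟨ht, (ENNReal.ofReal_lt_iff_lt_toReal ht.le hc).1 h⟩,
      fun ⟨ht, h⟩ => ⟨(ENNReal.ofReal_lt_iff_lt_toReal ht.le hc).2 h, ht⟩⟩
  rw [this, Real.volume_Ioo, sub_zero, ENNReal.ofReal_toReal hc]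

theorem lintegral_Ioi_ofReal_eq_top : ∫⁻ t in Ioi (0 : ℝ), ENNReal.ofReal t = ⊤ := by
  refine top_unique ?_
  calc ⊤ = ∫⁻ _ in Ioi (1 : ℝ), 1 := by simp
    _ ≤ ∫⁻ t in Ioi (1 : ℝ), ENNReal.ofReal t :=
        setLIntegral_mono ENNReal.measurable_ofReal fun t ht => by simpa using ht.le
    _ ≤ ∫⁻ t in Ioi (0 : ℝ), ENNReal.ofReal t := lintegral_mono_set (Ioi_subset_Ioi zero_le_one)

theorem lintegral_Ioo_zero_ofReal {b : ℝ} (hb : 0 ≤ b) :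
    ∫⁻ t in Ioo 0 b, ENNReal.ofReal t = ENNReal.ofReal (b ^ 2 / 2) := by
  rw [← ofReal_integral_eq_lintegral_ofReal]
  · rw [← integral_Ioc_eq_integral_Ioo, ← intervalIntegral.integral_of_le hb, integral_id]
    ring_nf
  · exact continuous_id.integrableOn_Icc.mono_set Ioo_subset_Icc_self
  · exact (ae_restrict_iff' measurableSet_Ioo).2 (ae_of_all _ fun t ht => ht.1.le)

theorem lintegral_Ioi_indicator_two_mul_ofReal_lt (c : ℝ≥0∞) :
    ∫⁻ t in Ioi 0, {t : ℝ | 2 * ENNReal.ofReal t < c}.indicator (8 * ENNReal.ofReal ·) t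
      = c ^ 2 := by
  have hmeas : MeasurableSet {t : ℝ | 2 * ENNReal.ofReal t < c} :=
    measurableSet_lt (measurable_const.mul ENNReal.measurable_ofReal) measurable_const
  rw [lintegral_indicator hmeas, Measure.restrict_restrict hmeas,
    lintegral_const_mul _ ENNReal.measurable_ofReal]
  rcases eq_or_ne c ⊤ with rfl | hc
  · simp [ENNReal.mul_lt_top, lintegral_Ioi_ofReal_eq_top]
  have hset : {t : ℝ | 2 * ENNReal.ofReal t < c} ∩ Ioi 0 = Ioo 0 (c.toReal / 2) := by
    ext t
    simp only [mem_inter_iff, mem_ofPred_eq, mem_Ioi, mem_Ioo, and_comm (a := 0 < t)]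
    refine and_congr_left fun ht => ?_
    rw [← ENNReal.ofReal_ofNat 2, ← ENNReal.ofReal_mul zero_le_two,
      ENNReal.ofReal_lt_iff_lt_toReal (by positivity) hc, lt_div_iff₀' two_pos]
  rw [hset, lintegral_Ioo_zero_ofReal (by positivity), ← ENNReal.ofReal_ofNat 8,
    ← ENNReal.ofReal_mul (by norm_num), ← ENNReal.ofReal_toReal hc,
    ← ENNReal.ofReal_pow ENNReal.toReal_nonneg, ENNReal.toReal_ofReal ENNReal.toReal_nonneg]
  ring_nf

theorem tsum_mul_sq_eq_lintegral_Ioi {ι : Type*} [Countable ι] (a A : ι → ℝ≥0∞) :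
    ∑' i, a i * A i ^ 2
      = ∫⁻ t in Ioi 0,
          8 * (ENNReal.ofReal t * ∑' i, {i | 2 * ENNReal.ofReal t < A i}.indicator a i) := by
  have hmeas (c : ℝ≥0∞) :
      Measurable ({t : ℝ | 2 * ENNReal.ofReal t < c}.indicator (8 * ENNReal.ofReal ·)) :=
    (measurable_const.mul ENNReal.measurable_ofReal).indicator
      (measurableSet_lt (measurable_const.mul ENNReal.measurable_ofReal) measurable_const)
  calc ∑' i, a i * A i ^ 2
      = ∑' i, ∫⁻ t in Ioi 0,
          {t : ℝ | 2 * ENNReal.ofReal t < A i}.indicator (8 * ENNReal.ofReal ·) t * a i := by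
        refine tsum_congr fun i => ?_
        rw [lintegral_mul_const _ (hmeas _), lintegral_Ioi_indicator_two_mul_ofReal_lt, mul_comm]
    _ = ∫⁻ t in Ioi 0, ∑' i,
          {t : ℝ | 2 * ENNReal.ofReal t < A i}.indicator (8 * ENNReal.ofReal ·) t * a i :=
        (lintegral_tsum fun i => ((hmeas _).mul_const _).aemeasurable).symm
    _ = _ := by
        refine lintegral_congr fun t => ?_
        rw [← ENNReal.tsum_mul_left, ← ENNReal.tsum_mul_left]
        refine tsum_congr fun i => ?_
        by_cases hi : 2 * ENNReal.ofReal t < A i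
        · simp [hi, mul_assoc]
        · simp [hi]

section LayerCake

variable {α : Type*} [MeasurableSpace α] {μ : Measure α} {g : α → ℝ≥0∞}

theorem measurable_uncurry_indicator_ofReal_lt (hg : Measurable g) :
    Measurable (Function.uncurry fun (t : ℝ) => {x | ENNReal.ofReal t < g x}.indicator g) :=
  Measurable.ite (p := fun q : ℝ × α => q.2 ∈ {x | ENNReal.ofReal q.1 < g x})
    (measurableSet_lt (ENNReal.measurable_ofReal.comp measurable_fst) (hg.comp measurable_snd))
    (hg.comp measurable_snd) measurable_const

theorem lintegral_Ioi_lintegral_indicator_ofReal_lt [SFinite μ] (hg : Measurable g) :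
    ∫⁻ t in Ioi 0, ∫⁻ x, {x | ENNReal.ofReal t < g x}.indicator g x ∂μ = ∫⁻ x, g x ^ 2 ∂μ := by
  rw [lintegral_lintegral_swap (measurable_uncurry_indicator_ofReal_lt hg).aemeasurable]
  refine lintegral_congr fun x => ?_
  have hmeas : MeasurableSet {t : ℝ | ENNReal.ofReal t < g x} :=
    measurableSet_lt ENNReal.measurable_ofReal measurable_const
  have hslice : (fun t : ℝ => {x | ENNReal.ofReal t < g x}.indicator g x)
      = {t : ℝ | ENNReal.ofReal t < g x}.indicator fun _ => g x := by
    ext t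
    simp [indicator_apply]
  rw [hslice, lintegral_indicator_const hmeas, Measure.restrict_apply hmeas,
    volume_setOf_ofReal_lt_inter_Ioi, sq]

theorem mul_le_setLIntegral_indicator_of_two_mul_lt_setLAverage {A : Set α} {s : ℝ≥0∞}
    (hs : s ≠ ⊤) (h : 2 * s < ⨍⁻ x in A, g x ∂μ) :
    s * μ A ≤ ∫⁻ x in A, {x | s < g x}.indicator g x ∂μ := by
  rw [setLAverage_eq] at h
  have hA0 : μ A ≠ 0 := fun h0 => by simp [Measure.restrict_eq_zero.2 h0] at h
  have hAtop : μ A ≠ ⊤ := fun htop => by simp [htop] at h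
  have hsplit : ∫⁻ x in A, g x ∂μ ≤ ∫⁻ x in A, {x | s < g x}.indicator g x ∂μ + s * μ A :=
    calc ∫⁻ x in A, g x ∂μ ≤ ∫⁻ x in A, ({x | s < g x}.indicator g x + s) ∂μ := by
          refine lintegral_mono fun x => ?_
          by_cases hx : s < g x
          · simp [hx]
          · simpa [hx] using not_lt.1 hx
      _ = ∫⁻ x in A, {x | s < g x}.indicator g x ∂μ + s * μ A := by
          rw [lintegral_add_right _ measurable_const, setLIntegral_const, mul_comm]
  have hlt : s * μ A + s * μ A < ∫⁻ x in A, {x | s < g x}.indicator g x ∂μ + s * μ A :=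
    calc s * μ A + s * μ A = 2 * s * μ A := by ring
      _ < ∫⁻ x in A, g x ∂μ := (ENNReal.lt_div_iff_mul_lt (Or.inl hA0) (Or.inl hAtop)).1 h
      _ ≤ _ := hsplit
  exact ((ENNReal.add_lt_add_iff_right (ENNReal.mul_ne_top hs hAtop)).1 hlt).le

end LayerCake

theorem sq_eLpNorm_two {α : Type*} [MeasurableSpace α] {μ : Measure α} (f : α → ℝ) :
    eLpNorm f 2 μ ^ 2 = ∫⁻ x, ‖f x‖ₑ ^ 2 ∂μ := by
  simpa using eLpNorm_nnreal_pow_eq_lintegral (f := f) (μ := μ) (p := 2) two_ne_zero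

namespace DyadicCube

instance : Countable (DyadicCube n) :=
  Function.Injective.countable (f := fun Q : DyadicCube n => (Q.k, Q.m))
    fun ⟨_, _⟩ ⟨_, _⟩ h => by simpa using h

theorem toSet_eq_pi (Q : DyadicCube n) :
    Q.toSet = univ.pi fun i => Ico ((Q.m i : ℝ) * 2 ^ Q.k) ((Q.m i + 1) * 2 ^ Q.k) := by
  ext x
  simp [toSet]

theorem measurableSet_toSet (Q : DyadicCube n) : MeasurableSet Q.toSet := by
  rw [toSet_eq_pi]
  exact MeasurableSet.univ_pi fun _ => measurableSet_Ico

theorem sigmaFinite_of_measure_toSet_lt_top {μ : Measure (Fin n → ℝ)}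
    (hμ : ∀ Q : DyadicCube n, μ Q.toSet < ⊤) : SigmaFinite μ := by
  refine Measure.sigmaFinite_of_countable (countable_range toSet) (forall_mem_range.2 hμ) ?_
  refine eq_univ_of_forall fun x => mem_sUnion.2 ⟨_, mem_range_self ⟨0, fun i => ⌊x i⌋⟩, ?_⟩
  intro i
  simp only [zpow_zero, mul_one]
  exact ⟨Int.floor_le _, Int.lt_floor_add_one _⟩

theorem toSet_subset_parent (Q : DyadicCube n) : Q.toSet ⊆ Q.parent.toSet := by
  intro x hx i
  obtain ⟨hlo, hhi⟩ := hx i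
  have hpow : (2 : ℝ) ^ (Q.k + 1) = 2 * 2 ^ Q.k := by
    rw [zpow_add_one₀ two_ne_zero, mul_comm]
  have hlo' : 2 * Int.fdiv (Q.m i) 2 ≤ Q.m i := by
    rw [Int.fdiv_eq_ediv_of_nonneg _ zero_le_two]; omega
  have hhi' : Q.m i + 1 ≤ 2 * (Int.fdiv (Q.m i) 2 + 1) := by
    rw [Int.fdiv_eq_ediv_of_nonneg _ zero_le_two]; omega
  simp only [parent, hpow]
  constructor
  · calc (Int.fdiv (Q.m i) 2 : ℝ) * (2 * 2 ^ Q.k)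
        = ((2 * Int.fdiv (Q.m i) 2 : ℤ) : ℝ) * 2 ^ Q.k := by push_cast; ring
      _ ≤ Q.m i * 2 ^ Q.k := by gcongr
      _ ≤ x i := hlo
  · calc x i < (Q.m i + 1) * 2 ^ Q.k := hhi
      _ = ((Q.m i + 1 : ℤ) : ℝ) * 2 ^ Q.k := by push_cast; ring
      _ ≤ ((2 * (Int.fdiv (Q.m i) 2 + 1) : ℤ) : ℝ) * 2 ^ Q.k := by gcongr
      _ = (Int.fdiv (Q.m i) 2 + 1 : ℝ) * (2 * 2 ^ Q.k) := by push_cast; ring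

theorem eq_of_k_eq_of_mem {P R : DyadicCube n} (hk : P.k = R.k) {x : Fin n → ℝ}
    (hP : x ∈ P.toSet) (hR : x ∈ R.toSet) : P = R := by
  obtain ⟨k, p⟩ := P
  obtain ⟨_, r⟩ := R
  obtain rfl : k = _ := hk
  refine congrArg _ (funext fun i => ?_)
  have hpos : (0 : ℝ) < 2 ^ k := zpow_pos two_pos _
  have hpr : (p i : ℝ) < r i + 1 := lt_of_mul_lt_mul_right ((hP i).1.trans_lt (hR i).2) hpos.le
  have hrp : (r i : ℝ) < p i + 1 := lt_of_mul_lt_mul_right ((hR i).1.trans_lt (hP i).2) hpos.le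
  have : p i < r i + 1 := by exact_mod_cast hpr
  have : r i < p i + 1 := by exact_mod_cast hrp
  omega

theorem toSet_subset_of_k_le_of_not_disjoint {P R : DyadicCube n} (hk : P.k ≤ R.k)
    (h : ¬Disjoint P.toSet R.toSet) : P.toSet ⊆ R.toSet := by
  obtain ⟨d, hd⟩ := Int.eq_ofNat_of_zero_le (sub_nonneg.2 hk)
  induction d generalizing P with
  | zero =>
    obtain ⟨x, hxP, hxR⟩ := not_disjoint_iff.1 h
    rw [eq_of_k_eq_of_mem (by omega) hxP hxR]
  | succ d ih =>
    refine (toSet_subset_parent P).trans (ih (by simp [parent]; omega) ?_ (by simp [parent]; omega))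
    exact fun hdisj => h (hdisj.mono_left (toSet_subset_parent P))

theorem exists_pairwiseDisjoint_subset_cover (s : Finset (DyadicCube n)) :
    ∃ T ⊆ s, (T : Set (DyadicCube n)).PairwiseDisjoint toSet ∧
      ∀ Q ∈ s, ∃ R ∈ T, Q.toSet ⊆ R.toSet := by
  classical
  -- the maximal cubes of `s`: those meeting no cube of `s` of larger side length
  set T := s.filter fun R => ∀ Q ∈ s, R.k < Q.k → Disjoint R.toSet Q.toSet
  have hdisj : ∀ R₁ ∈ T, ∀ R₂ ∈ s, R₁.k ≤ R₂.k → R₁ ≠ R₂ → Disjoint R₁.toSet R₂.toSet := by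
    intro R₁ hR₁ R₂ hR₂ hk hne
    rcases hk.lt_or_eq with hlt | heq
    · exact (Finset.mem_filter.1 hR₁).2 R₂ hR₂ hlt
    · exact disjoint_left.2 fun x hx₁ hx₂ => hne (eq_of_k_eq_of_mem heq hx₁ hx₂)
  refine ⟨T, Finset.filter_subset _ _, fun R₁ hR₁ R₂ hR₂ hne => ?_, fun Q hQ => ?_⟩
  · rcases le_total R₁.k R₂.k with hk | hk
    · exact hdisj R₁ hR₁ R₂ (Finset.mem_filter.1 hR₂).1 hk hne
    · exact (hdisj R₂ hR₂ R₁ (Finset.mem_filter.1 hR₁).1 hk hne.symm).symm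
  obtain ⟨R, hR, hmax⟩ := (s.filter fun R => Q.toSet ⊆ R.toSet).exists_max_image k
    ⟨Q, Finset.mem_filter.2 ⟨hQ, subset_rfl⟩⟩
  rw [Finset.mem_filter] at hR
  refine ⟨R, Finset.mem_filter.2 ⟨hR.1, fun P hP hlt => by_contra fun hPR => ?_⟩, hR.2⟩
  have hQP := hR.2.trans (toSet_subset_of_k_le_of_not_disjoint hlt.le hPR)
  exact hlt.not_ge (hmax P (Finset.mem_filter.2 ⟨hP, hQP⟩))

def IsCarleson (μ : Measure (Fin n → ℝ)) (a : DyadicCube n → ℝ≥0∞) (C : ℝ≥0∞) : Prop :=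
  ∀ R : DyadicCube n, ∑' Q : {Q : DyadicCube n // Q.toSet ⊆ R.toSet}, a Q.1 ≤ C * μ R.toSet

namespace IsCarleson

variable {μ : Measure (Fin n → ℝ)} {a : DyadicCube n → ℝ≥0∞} {C : ℝ≥0∞}

theorem sum_le_mul_sum_of_cover (ha : IsCarleson μ a C) {s T : Finset (DyadicCube n)}
    (hcover : ∀ Q ∈ s, ∃ R ∈ T, Q.toSet ⊆ R.toSet) :
    ∑ Q ∈ s, a Q ≤ C * ∑ R ∈ T, μ R.toSet := by
  have hs : (s : Set (DyadicCube n)) ⊆ ⋃ R ∈ T, {Q : DyadicCube n | Q.toSet ⊆ R.toSet} :=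
    fun Q hQ => by simpa using hcover Q hQ
  calc ∑ Q ∈ s, a Q = ∑' Q : (s : Set (DyadicCube n)), a Q := (Finset.tsum_subtype s a).symm
    _ ≤ ∑' Q : ⋃ R ∈ T, {Q : DyadicCube n | Q.toSet ⊆ R.toSet}, a Q :=
        ENNReal.tsum_mono_subtype a hs
    _ ≤ ∑ R ∈ T, ∑' Q : {Q : DyadicCube n | Q.toSet ⊆ R.toSet}, a Q :=
        ENNReal.tsum_biUnion_le a T _
    _ ≤ ∑ R ∈ T, C * μ R.toSet := Finset.sum_le_sum fun R _ => ha R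
    _ = C * ∑ R ∈ T, μ R.toSet := (Finset.mul_sum ..).symm

theorem mul_tsum_indicator_le (ha : IsCarleson μ a C) {S : Set (DyadicCube n)} {s : ℝ≥0∞}
    {φ : (Fin n → ℝ) → ℝ≥0∞} (hS : ∀ R ∈ S, s * μ R.toSet ≤ ∫⁻ x in R.toSet, φ x ∂μ) :
    s * ∑' Q, S.indicator a Q ≤ C * ∫⁻ x, φ x ∂μ := by
  classical
  rw [ENNReal.tsum_eq_iSup_sum, ENNReal.mul_iSup]
  refine iSup_le fun F => ?_
  rw [Finset.sum_indicator_eq_sum_filter]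
  obtain ⟨T, hTF, hdisj, hcover⟩ := exists_pairwiseDisjoint_subset_cover (F.filter (· ∈ S))
  have hTS : ∀ R ∈ T, R ∈ S := fun R hR => (Finset.mem_filter.1 (hTF hR)).2
  calc s * ∑ Q ∈ F.filter (· ∈ S), a Q ≤ s * (C * ∑ R ∈ T, μ R.toSet) := by
        gcongr; exact ha.sum_le_mul_sum_of_cover hcover
    _ = C * ∑ R ∈ T, s * μ R.toSet := by simp only [Finset.mul_sum, mul_left_comm s C]
    _ ≤ C * ∑ R ∈ T, ∫⁻ x in R.toSet, φ x ∂μ := by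
        gcongr with R hR; exact hS R (hTS R hR)
    _ = C * ∫⁻ x in ⋃ R ∈ T, R.toSet, φ x ∂μ := by
        rw [lintegral_biUnion_finset hdisj fun R _ => R.measurableSet_toSet]
    _ ≤ C * ∫⁻ x, φ x ∂μ := by gcongr; exact Measure.restrict_le_self

theorem tsum_mul_setLAverage_sq_le (hμ : ∀ Q : DyadicCube n, μ Q.toSet < ⊤)
    (ha : IsCarleson μ a C) {g : (Fin n → ℝ) → ℝ≥0∞} (hg : Measurable g) :
    ∑' Q, a Q * (⨍⁻ x in Q.toSet, g x ∂μ) ^ 2 ≤ 8 * C * ∫⁻ x, g x ^ 2 ∂μ := by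
  have := sigmaFinite_of_measure_toSet_lt_top hμ
  set F : ℝ → (Fin n → ℝ) → ℝ≥0∞ := fun t => {x | ENNReal.ofReal t < g x}.indicator g
  have hF : Measurable fun t => ∫⁻ x, F t x ∂μ :=
    (measurable_uncurry_indicator_ofReal_lt hg).lintegral_prod_right'
  have hlevel (t : ℝ) : ENNReal.ofReal t *
      ∑' Q, {Q | 2 * ENNReal.ofReal t < ⨍⁻ x in Q.toSet, g x ∂μ}.indicator a Q
      ≤ C * ∫⁻ x, F t x ∂μ :=
    ha.mul_tsum_indicator_le fun _ hR =>
      mul_le_setLIntegral_indicator_of_two_mul_lt_setLAverage ENNReal.ofReal_ne_top hR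
  calc ∑' Q, a Q * (⨍⁻ x in Q.toSet, g x ∂μ) ^ 2
      = ∫⁻ t in Ioi 0, 8 * (ENNReal.ofReal t *
          ∑' Q, {Q | 2 * ENNReal.ofReal t < ⨍⁻ x in Q.toSet, g x ∂μ}.indicator a Q) :=
        tsum_mul_sq_eq_lintegral_Ioi a _
    _ ≤ ∫⁻ t in Ioi 0, 8 * (C * ∫⁻ x, F t x ∂μ) :=
        lintegral_mono fun t => mul_le_mul_right (hlevel t) 8
    _ = 8 * C * ∫⁻ x, g x ^ 2 ∂μ := by
        rw [lintegral_const_mul _ (hF.const_mul C), lintegral_const_mul _ hF,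
          lintegral_Ioi_lintegral_indicator_ofReal_lt hg, mul_assoc]

end IsCarleson

end DyadicCube

theorem enorm_avg_le_setLAverage (μ : Measure (Fin n → ℝ)) (f : (Fin n → ℝ) → ℝ)
    (Q : DyadicCube n) : ‖avg μ f Q‖ₑ ≤ ⨍⁻ x in Q.toSet, ‖f x‖ₑ ∂μ := by
  unfold avg
  split_ifs with h0
  · simp
  rcases eq_or_ne (μ Q.toSet) ⊤ with htop | htop
  · simp [htop]
  rw [setLAverage_eq, Real.enorm_eq_ofReal_abs, abs_div, abs_of_nonneg ENNReal.toReal_nonneg,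
    ENNReal.ofReal_div_of_pos (ENNReal.toReal_pos h0 htop), ENNReal.ofReal_toReal htop,
    ← Real.enorm_eq_ofReal_abs]
  exact ENNReal.div_le_div_right (enorm_integral_le_lintegral_enorm _) _

theorem avg_congr_ae {μ : Measure (Fin n → ℝ)} {f g : (Fin n → ℝ) → ℝ} (h : f =ᵐ[μ] g) :
    avg μ f = avg μ g := by
  ext Q
  simp only [avg, integral_congr_ae (ae_restrict_of_ae h)]

/-- **Dyadic Carleson embedding theorem.** If `(a_Q)` is a nonnegative sequence indexed by
dyadic cubes satisfying `∑_{Q ⊆ R} a_Q ≤ C μ(R)` for all dyadic `R`, then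
`∑_Q a_Q |⟨f⟩^μ_Q|² ≤ C' ‖f‖²_{L²(μ)}` with `C'` depending only on `C`. -/
theorem dyadic_carleson_embedding (C : ℝ≥0∞) (hC : C ≠ ⊤) :
    ∃ C' : ℝ≥0∞, C' ≠ ⊤ ∧
      ∀ (n : ℕ) (μ : Measure (Fin n → ℝ)),
        (∀ Q : DyadicCube n, μ Q.toSet < ⊤) →
        ∀ a : DyadicCube n → ℝ≥0∞,
          (∀ R : DyadicCube n,
            ∑' Q : {Q : DyadicCube n // Q.toSet ⊆ R.toSet}, a Q.1 ≤ C * μ R.toSet) →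
          ∀ f : (Fin n → ℝ) → ℝ, MemLp f 2 μ →
            ∑' Q : DyadicCube n, a Q * ENNReal.ofReal ((avg μ f Q) ^ 2)
              ≤ C' * eLpNorm f 2 μ ^ 2 := by
  refine ⟨8 * C, ENNReal.mul_ne_top ENNReal.ofNat_ne_top hC, fun n μ hμ a ha f hf => ?_⟩
  obtain ⟨f', hf'meas, hff'⟩ := hf.aestronglyMeasurable
  calc ∑' Q, a Q * ENNReal.ofReal (avg μ f Q ^ 2)
      ≤ ∑' Q, a Q * (⨍⁻ x in Q.toSet, ‖f' x‖ₑ ∂μ) ^ 2 := by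
        refine ENNReal.tsum_le_tsum fun Q => mul_le_mul_right ?_ _
        rw [avg_congr_ae hff', ← sq_abs, ENNReal.ofReal_pow (abs_nonneg _),
          ← Real.enorm_eq_ofReal_abs]
        exact pow_le_pow_left' (enorm_avg_le_setLAverage μ f' Q) 2
    _ ≤ 8 * C * ∫⁻ x, ‖f' x‖ₑ ^ 2 ∂μ :=
        DyadicCube.IsCarleson.tsum_mul_setLAverage_sq_le hμ ha hf'meas.measurable.enorm
    _ = 8 * C * eLpNorm f 2 μ ^ 2 := by rw [eLpNorm_congr_ae hff', sq_eLpNorm_two]
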